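/- With S = A ∪ B as above embedded via ε(a,b) = (a,b,0) into the extraspecial group G of order p^{1+2d} (with either multiplication (a,b,z)(c,d,w) = (a+c,b+d,z+w+b·c) or the variant with the carrying term), no two distinct elements of ε(S) commute: for distinct g,h ∈ ε(S), [g,h] equals (0,0,1) if g,h ∈ ε(A), (0,0,−1) if g,h ∈ ε(B), and (0,0,±1) in the mixed case. In particular [g,h] ≠ identity since p is odd. -/

import Mathlib

namespace Stmt17

/-- The "carrying" cocycle `φ(a,b) = [ι(a)+ι(b) ≥ p]`. -/
def phi (p : ℕ) (a b : ZMod p) : ZMod p :=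
  if a.val + b.val < p then 0 else 1

/-- Exponent-`p` multiplication `(a,b,z)(c,d,w) = (a+c, b+d, z+w+b·c)`. -/
def gmul (p d : ℕ) (g h : (Fin d → ZMod p) × (Fin d → ZMod p) × ZMod p) :
    (Fin d → ZMod p) × (Fin d → ZMod p) × ZMod p :=
  (g.1 + h.1, g.2.1 + h.2.1, g.2.2 + h.2.2 + ∑ i : Fin d, g.2.1 i * h.1 i)

/-- Inverse for `gmul`: `(a,b,z)⁻¹ = (-a,-b,-z+a·b)`. -/
def ginv (p d : ℕ) (g : (Fin d → ZMod p) × (Fin d → ZMod p) × ZMod p) :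
    (Fin d → ZMod p) × (Fin d → ZMod p) × ZMod p :=
  (-g.1, -g.2.1, -g.2.2 + ∑ i : Fin d, g.1 i * g.2.1 i)

/-- Commutator `[g,h] = g⁻¹h⁻¹gh` for `gmul`. -/
def gcomm (p d : ℕ) (g h : (Fin d → ZMod p) × (Fin d → ZMod p) × ZMod p) :
    (Fin d → ZMod p) × (Fin d → ZMod p) × ZMod p :=
  gmul p d (gmul p d (gmul p d (ginv p d g) (ginv p d h)) g) h

/-- Carrying multiplication `(a,b,z)(c,d,w) = (a+c, b+d, z+w+b·c+φ(a₁,c₁))`. -/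
def mmul (p d : ℕ) (hd : 0 < d)
    (g h : (Fin d → ZMod p) × (Fin d → ZMod p) × ZMod p) :
    (Fin d → ZMod p) × (Fin d → ZMod p) × ZMod p :=
  (g.1 + h.1, g.2.1 + h.2.1,
    g.2.2 + h.2.2 + (∑ i : Fin d, g.2.1 i * h.1 i) + phi p (g.1 ⟨0, hd⟩) (h.1 ⟨0, hd⟩))

/-- Inverse for `mmul`: `(a,b,z)⁻¹ = (-a,-b,-z+a·b-φ(a₁,-a₁))`. -/
def minv (p d : ℕ) (hd : 0 < d)
    (g : (Fin d → ZMod p) × (Fin d → ZMod p) × ZMod p) :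
    (Fin d → ZMod p) × (Fin d → ZMod p) × ZMod p :=
  (-g.1, -g.2.1,
    -g.2.2 + (∑ i : Fin d, g.1 i * g.2.1 i) - phi p (g.1 ⟨0, hd⟩) (-g.1 ⟨0, hd⟩))

/-- Commutator `[g,h] = g⁻¹h⁻¹gh` for `mmul`. -/
def mcomm (p d : ℕ) (hd : 0 < d)
    (g h : (Fin d → ZMod p) × (Fin d → ZMod p) × ZMod p) :
    (Fin d → ZMod p) × (Fin d → ZMod p) × ZMod p :=
  mmul p d hd (mmul p d hd (mmul p d hd (minv p d hd g) (minv p d hd h)) g) h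

/-- `a_k = Σ_{i ≤ k} e_i + Σ_{j ≤ k-1} f_j`. -/
def aVec (p d : ℕ) (k : Fin d) : (Fin d → ZMod p) × (Fin d → ZMod p) :=
  (fun i => if i ≤ k then 1 else 0, fun j => if j < k then 1 else 0)

/-- `b_k = Σ_{i ≤ k-1} e_i + 2 e_k + Σ_{j ≤ k} f_j`. -/
def bVec (p d : ℕ) (k : Fin d) : (Fin d → ZMod p) × (Fin d → ZMod p) :=
  (fun i => if i < k then 1 else if i = k then 2 else 0,
   fun j => if j ≤ k then 1 else 0)

/-- The embedding `ε(a,b) = (a,b,0)` of `S = A ∪ B`. -/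
def εS (p d : ℕ) : Set ((Fin d → ZMod p) × (Fin d → ZMod p) × ZMod p) :=
  (fun s : (Fin d → ZMod p) × (Fin d → ZMod p) => (s.1, s.2, (0 : ZMod p))) ''
    (Set.range (aVec p d) ∪ Set.range (bVec p d))

/-!
For both multiplications the commutator is `[g,h] = (0, 0, ω(g,h))`, where
`ω((a,b),(c,d)) = b·c - a·d`. For the carrying multiplication this holds because
`p · φ(a,b) = val a + val b - val (a+b)` is a coboundary, so the carries picked up along
`g⁻¹h⁻¹gh` cancel against those of the inverses. It remains to see that `ω = ±1` on distinct
elements of `S`. With `δ_k = (e_k, f_k)` we have `b_k = a_k + δ_k`, and `ω(a_k, a_l) = -1` for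
`k < l`, `ω(a_k, δ_l) = -[k = l]`, `ω(δ_k, δ_l) = 0`; bilinearity and antisymmetry of `ω` do the
rest.
-/

open Matrix

section SymplecticForm
variable {ι R : Type*} [Fintype ι] [CommRing R]

def symplecticForm (s t : (ι → R) × (ι → R)) : R :=
  s.2 ⬝ᵥ t.1 - s.1 ⬝ᵥ t.2

lemma symplecticForm_swap (s t : (ι → R) × (ι → R)) :
    symplecticForm t s = -symplecticForm s t := by
  simp only [symplecticForm, dotProduct_comm t.2, dotProduct_comm t.1]
  ring

lemma symplecticForm_self (s : (ι → R) × (ι → R)) : symplecticForm s s = 0 := by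
  simp [symplecticForm, dotProduct_comm s.2]

lemma symplecticForm_add_left (s t u : (ι → R) × (ι → R)) :
    symplecticForm (s + t) u = symplecticForm s u + symplecticForm t u := by
  simp only [symplecticForm, Prod.fst_add, Prod.snd_add, add_dotProduct]
  ring

lemma symplecticForm_add_right (s t u : (ι → R) × (ι → R)) :
    symplecticForm s (t + u) = symplecticForm s t + symplecticForm s u := by
  simp only [symplecticForm, Prod.fst_add, Prod.snd_add, dotProduct_add]
  ring

lemma symplecticForm_diag (u v : ι → R) : symplecticForm (u, u) (v, v) = 0 :=
  sub_self _

lemma sum_mul_eq_dotProduct (v w : ι → R) : ∑ i, v i * w i = v ⬝ᵥ w := rfl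

end SymplecticForm

lemma phi_comm {p : ℕ} (a b : ZMod p) : phi p a b = phi p b a := by
  simp only [phi, Nat.add_comm]

section Carry
variable {p : ℕ} [NeZero p]

lemma phi_eq_div (a b : ZMod p) : phi p a b = ((a.val + b.val) / p : ℕ) := by
  have ha := ZMod.val_lt a
  have hb := ZMod.val_lt b
  unfold phi
  split_ifs with h
  · rw [Nat.div_eq_of_lt h, Nat.cast_zero]
  · rw [Nat.div_eq_of_lt_le (k := 1) (by omega) (by omega), Nat.cast_one]

lemma val_add_val_eq (a b : ZMod p) :
    a.val + b.val = (a + b).val + p * ((a.val + b.val) / p) := by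
  rw [ZMod.val_add, Nat.mod_add_div]

-- The carries picked up along `g⁻¹h⁻¹gh` equal those of `g⁻¹` and `h⁻¹`.
lemma phi_commutator (x y : ZMod p) :
    phi p (-x) (-y) + phi p (-x + -y) x + phi p (-x + -y + x) y
      = phi p x (-x) + phi p y (-y) := by
  simp only [phi_eq_div]
  norm_cast
  congr 1
  apply Nat.eq_of_mul_eq_mul_left (Nat.pos_of_neZero p)
  have h₁ := val_add_val_eq (-x) (-y)
  have h₂ := val_add_val_eq (-x + -y) x
  have h₃ := val_add_val_eq (-x + -y + x) y
  have h₄ := val_add_val_eq x (-x)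
  have h₅ := val_add_val_eq y (-y)
  simp only [show -x + -y + x = -y by ring, add_neg_cancel, neg_add_cancel,
    ZMod.val_zero] at h₁ h₂ h₃ h₄ h₅ ⊢
  linarith

end Carry

section Commutator
variable {p d : ℕ} (g h : (Fin d → ZMod p) × (Fin d → ZMod p) × ZMod p)

lemma gcomm_eq : gcomm p d g h = (0, 0, symplecticForm (g.1, g.2.1) (h.1, h.2.1)) := by
  simp only [gcomm, gmul, ginv, symplecticForm, sum_mul_eq_dotProduct,
    add_dotProduct, neg_dotProduct, dotProduct_neg, Prod.mk.injEq]
  refine ⟨by abel, by abel, ?_⟩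
  rw [dotProduct_comm g.2.1 g.1, dotProduct_comm h.2.1 h.1, dotProduct_comm h.2.1 g.1]
  ring

lemma mcomm_eq [NeZero p] (hd : 0 < d) :
    mcomm p d hd g h = (0, 0, symplecticForm (g.1, g.2.1) (h.1, h.2.1)) := by
  simp only [mcomm, mmul, minv, symplecticForm, sum_mul_eq_dotProduct, Prod.mk.injEq]
  simp only [add_dotProduct, neg_dotProduct, dotProduct_neg, Pi.add_apply, Pi.neg_apply]
  refine ⟨by abel, by abel, ?_⟩
  rw [dotProduct_comm g.2.1 g.1, dotProduct_comm h.2.1 h.1, dotProduct_comm h.2.1 g.1]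
  linear_combination phi_commutator (g.1 ⟨0, hd⟩) (h.1 ⟨0, hd⟩)

lemma gmul_eq_gmul_iff :
    gmul p d g h = gmul p d h g ↔ symplecticForm (g.1, g.2.1) (h.1, h.2.1) = 0 := by
  simp only [gmul, symplecticForm, sum_mul_eq_dotProduct, Prod.mk.injEq, add_comm h.1,
    add_comm h.2.1, true_and, dotProduct_comm h.2.1]
  constructor <;> intro e <;> linear_combination e

lemma mmul_eq_mmul_iff (hd : 0 < d) :
    mmul p d hd g h = mmul p d hd h g ↔ symplecticForm (g.1, g.2.1) (h.1, h.2.1) = 0 := by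
  simp only [mmul, symplecticForm, sum_mul_eq_dotProduct, Prod.mk.injEq, add_comm h.1,
    add_comm h.2.1, true_and, dotProduct_comm h.2.1, phi_comm (h.1 ⟨0, hd⟩)]
  constructor <;> intro e <;> linear_combination e

end Commutator

section Generators
variable {p d : ℕ}

lemma bVec_eq_aVec_add (k : Fin d) :
    bVec p d k = aVec p d k + (Pi.single k 1, Pi.single k 1) := by
  ext i <;> simp only [aVec, bVec, Prod.fst_add, Prod.snd_add, Pi.add_apply, Pi.single_apply]
  all_goals split_ifs <;> first | (exfalso; order) | norm_num

lemma symplecticForm_aVec_of_lt {k l : Fin d} (hkl : k < l) :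
    symplecticForm (aVec p d k) (aVec p d l) = -1 := by
  have hIio : ∀ i, (i < k ∧ i ≤ l) ↔ i < k :=
    fun i => ⟨And.left, fun h => ⟨h, (h.trans hkl).le⟩⟩
  have hIic : ∀ i, (i ≤ k ∧ i < l) ↔ i ≤ k :=
    fun i => ⟨And.left, fun h => ⟨h, h.trans_lt hkl⟩⟩
  simp only [symplecticForm, aVec, dotProduct, ite_zero_mul_ite_zero, mul_one, hIio, hIic,
    Finset.sum_boole, Finset.filter_gt_eq_Iio, Finset.filter_ge_eq_Iic, Fin.card_Iio, Fin.card_Iic]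
  push_cast
  ring

lemma symplecticForm_aVec_aVec (k l : Fin d) :
    symplecticForm (aVec p d k) (aVec p d l) = if k < l then -1 else if l < k then 1 else 0 := by
  rcases lt_trichotomy k l with h | rfl | h
  · simp [h, symplecticForm_aVec_of_lt h]
  · simp [symplecticForm_self]
  · rw [symplecticForm_swap, symplecticForm_aVec_of_lt h, if_neg h.asymm, if_pos h, neg_neg]

lemma symplecticForm_aVec_single (k l : Fin d) :
    symplecticForm (aVec p d k) (Pi.single l 1, Pi.single l 1) = if l = k then -1 else 0 := by
  simp only [symplecticForm, aVec, dotProduct_single, mul_one]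
  split_ifs <;> first | (exfalso; order) | norm_num

lemma symplecticForm_eq_one_or_neg_one {s t : (Fin d → ZMod p) × (Fin d → ZMod p)}
    (hs : s ∈ Set.range (aVec p d) ∪ Set.range (bVec p d))
    (ht : t ∈ Set.range (aVec p d) ∪ Set.range (bVec p d)) (hst : s ≠ t) :
    symplecticForm s t = 1 ∨ symplecticForm s t = -1 := by
  rcases hs with ⟨k, rfl⟩ | ⟨k, rfl⟩ <;> rcases ht with ⟨l, rfl⟩ | ⟨l, rfl⟩
  · have hkl : k ≠ l := fun h => hst (congrArg _ h)
    rw [symplecticForm_aVec_aVec]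
    split_ifs <;> first | (exfalso; order) | norm_num
  · rw [bVec_eq_aVec_add, symplecticForm_add_right, symplecticForm_aVec_aVec,
      symplecticForm_aVec_single]
    split_ifs <;> first | (exfalso; order) | norm_num
  · rw [symplecticForm_swap, bVec_eq_aVec_add, symplecticForm_add_right, symplecticForm_aVec_aVec,
      symplecticForm_aVec_single]
    split_ifs <;> first | (exfalso; order) | norm_num
  · have hkl : k ≠ l := fun h => hst (congrArg _ h)
    rw [bVec_eq_aVec_add, bVec_eq_aVec_add, symplecticForm_add_left, symplecticForm_add_right,
      symplecticForm_add_right, symplecticForm_swap (aVec p d l) (Pi.single k 1, Pi.single k 1),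
      symplecticForm_aVec_aVec, symplecticForm_aVec_single, symplecticForm_aVec_single,
      symplecticForm_diag]
    split_ifs <;> first | (exfalso; order) | norm_num

end Generators

theorem stmt17_general (p d : ℕ) (hp : p.Prime) (hd : 0 < d)
    (g h : (Fin d → ZMod p) × (Fin d → ZMod p) × ZMod p)
    (hgS : g ∈ εS p d) (hhS : h ∈ εS p d) (hne : g ≠ h) :
    (gcomm p d g h = (0, 0, 1) ∨ gcomm p d g h = (0, 0, -1)) ∧
    (mcomm p d hd g h = (0, 0, 1) ∨ mcomm p d hd g h = (0, 0, -1)) ∧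
    gcomm p d g h ≠ (0, 0, 0) ∧ mcomm p d hd g h ≠ (0, 0, 0) ∧
    gmul p d g h ≠ gmul p d h g ∧ mmul p d hd g h ≠ mmul p d hd h g := by
  have : Fact p.Prime := ⟨hp⟩
  obtain ⟨s, hs, rfl⟩ := hgS
  obtain ⟨t, ht, rfl⟩ := hhS
  rcases symplecticForm_eq_one_or_neg_one hs ht (by rintro rfl; exact hne rfl) with hω | hω <;>
    simp [gcomm_eq, mcomm_eq, gmul_eq_gmul_iff, mmul_eq_mmul_iff, hω]

/-- No two distinct elements of `ε(S)` commute, with respect to either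
extraspecial multiplication: for distinct `g, h ∈ ε(S)` the commutator
`[g,h]` is `(0,0,1)` or `(0,0,-1)` (hence, `p` being odd, not the identity),
and `gh ≠ hg`. -/
theorem stmt17 (p d : ℕ) (hp : p.Prime) (hodd : Odd p) (hd : 0 < d)
    (g h : (Fin d → ZMod p) × (Fin d → ZMod p) × ZMod p)
    (hgS : g ∈ εS p d) (hhS : h ∈ εS p d) (hne : g ≠ h) :
    (gcomm p d g h = (0, 0, 1) ∨ gcomm p d g h = (0, 0, -1)) ∧
    (mcomm p d hd g h = (0, 0, 1) ∨ mcomm p d hd g h = (0, 0, -1)) ∧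
    gcomm p d g h ≠ (0, 0, 0) ∧ mcomm p d hd g h ≠ (0, 0, 0) ∧
    gmul p d g h ≠ gmul p d h g ∧ mmul p d hd g h ≠ mmul p d hd h g :=
  stmt17_general p d hp hd g h hgS hhS hne

end Stmt17
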